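/- arXiv:2402.09414 — 8 statements merged into one kernel-verified Lean document; each statement's English description precedes it below -/
import Mathlib

section
/- Suppose ||Z_1 - Z_3|| = ||Z_2 - Z_3||, d_1 = d_2, and the circles S_1 and S_2 intersect at two points S_{12±}. Then the threshold d_3^0 = sqrt( (||Z_3 - S_{12+}||² + ||Z_3 - S_{12-}||²)/2 ) satisfies d_3^0 = sqrt( d_1² + ||Z_1 - Z_3||² - ||Z_1 - Z_2||²/2 ). -/
/-!
Both intersection points are equidistant from `Z₁` and `Z₂`, so `Z₁ S₁₂₊ Z₂ S₁₂₋` is a rhombus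
in the plane and its diagonals share the midpoint `M` of `Z₁Z₂`. Apollonius' theorem in the
triangles `Z₃ S₁₂₊ S₁₂₋`, `Z₃ Z₁ Z₂` and `S₁₂₊ Z₁ Z₂` then expresses
`‖Z₃ - S₁₂₊‖² + ‖Z₃ - S₁₂₋‖²` through `‖Z₃ - M‖²` and `‖S₁₂₊ - M‖²`, both of which are
determined by `d₁`, `‖Z₁ - Z₃‖` and `‖Z₁ - Z₂‖`.
-/

open EuclideanGeometry

variable {V P : Type*} [NormedAddCommGroup V] [InnerProductSpace ℝ V] [MetricSpace P]
  [NormedAddTorsor V P]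

theorem dist_sq_add_dist_sq_of_midpoint_eq {S T Z₁ Z₂ : P}
    (h : midpoint ℝ S T = midpoint ℝ Z₁ Z₂) (Z₃ : P) :
    dist Z₃ S ^ 2 + dist Z₃ T ^ 2 =
      dist Z₃ Z₁ ^ 2 + dist Z₃ Z₂ ^ 2 + dist S Z₁ ^ 2 + dist S Z₂ ^ 2 - dist Z₁ Z₂ ^ 2 := by
  have hST := dist_sq_add_dist_sq_eq_two_mul_dist_midpoint_sq_add_half_dist_sq Z₃ S T
  have hZ := dist_sq_add_dist_sq_eq_two_mul_dist_midpoint_sq_add_half_dist_sq Z₃ Z₁ Z₂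
  have hS := dist_sq_add_dist_sq_eq_two_mul_dist_midpoint_sq_add_half_dist_sq S Z₁ Z₂
  rw [← h, dist_left_midpoint (𝕜 := ℝ), Real.norm_two] at hS
  rw [h] at hST
  linear_combination hST - hZ - hS

theorem midpoint_eq_midpoint_of_dist_eq_of_finrank_eq_two [FiniteDimensional ℝ V]
    (hV : Module.finrank ℝ V = 2) {S T Z₁ Z₂ : P} {d : ℝ} (hZ : Z₁ ≠ Z₂) (hST : S ≠ T)
    (hS₁ : dist S Z₁ = d) (hS₂ : dist S Z₂ = d) (hT₁ : dist T Z₁ = d) (hT₂ : dist T Z₂ = d) :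
    midpoint ℝ S T = midpoint ℝ Z₁ Z₂ := by
  set σ := AffineIsometryEquiv.pointReflection ℝ (midpoint ℝ Z₁ Z₂)
  -- `σ` swaps `Z₁` and `Z₂`, so it maps the intersection of the two circles to itself.
  have hσ₁ : σ Z₁ = Z₂ := AffineIsometryEquiv.pointReflection_midpoint_left Z₁ Z₂
  have hσ₂ : σ Z₂ = Z₁ := AffineIsometryEquiv.pointReflection_midpoint_right Z₁ Z₂
  have hσ : ∀ X, dist X Z₁ = d → dist X Z₂ = d → σ X = S ∨ σ X = T := fun X hX₁ hX₂ ↦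
    eq_of_dist_eq_of_dist_eq_of_finrank_eq_two hV hZ hST hS₁ hT₁
      (by rw [← hσ₂, σ.dist_map, hX₂]) hS₂ hT₂ (by rw [← hσ₁, σ.dist_map, hX₁])
  rw [midpoint_eq_iff]
  rcases hσ S hS₁ hS₂ with hS | hS
  · exfalso
    rcases hσ T hT₁ hT₂ with hT | hT
    · exact hST (σ.injective (hS.trans hT.symm))
    · rw [AffineIsometryEquiv.pointReflection_fixed_iff] at hS hT
      exact hST (hS.trans hT.symm)
  · exact hS

theorem stmt_2_general (Z₁ Z₂ Z₃ S₁₂p S₁₂m : EuclideanSpace ℝ (Fin 2)) (d₁ d₂ : ℝ)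
    (hiso : dist Z₁ Z₃ = dist Z₂ Z₃) (hd : d₁ = d₂) (hZ : Z₁ ≠ Z₂)
    (hp₁ : dist S₁₂p Z₁ = d₁) (hp₂ : dist S₁₂p Z₂ = d₂)
    (hm₁ : dist S₁₂m Z₁ = d₁) (hm₂ : dist S₁₂m Z₂ = d₂)
    (hne : S₁₂p ≠ S₁₂m) :
    Real.sqrt ((dist Z₃ S₁₂p ^ 2 + dist Z₃ S₁₂m ^ 2) / 2) =
      Real.sqrt (d₁ ^ 2 + dist Z₁ Z₃ ^ 2 - dist Z₁ Z₂ ^ 2 / 2) := by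
  subst hd
  have hmid : midpoint ℝ S₁₂p S₁₂m = midpoint ℝ Z₁ Z₂ :=
    midpoint_eq_midpoint_of_dist_eq_of_finrank_eq_two finrank_euclideanSpace_fin hZ hne
      hp₁ hp₂ hm₁ hm₂
  rw [dist_sq_add_dist_sq_of_midpoint_eq hmid Z₃, dist_comm Z₃ Z₁, dist_comm Z₃ Z₂, ← hiso,
    hp₁, hp₂]
  congr 1
  ring

theorem stmt_2 (Z₁ Z₂ Z₃ S₁₂p S₁₂m : EuclideanSpace ℝ (Fin 2)) (d₁ d₂ : ℝ)
    (hd₁ : 0 < d₁)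
    (hiso : dist Z₁ Z₃ = dist Z₂ Z₃) (hd : d₁ = d₂) (hZ : Z₁ ≠ Z₂)
    (hp₁ : dist S₁₂p Z₁ = d₁) (hp₂ : dist S₁₂p Z₂ = d₂)
    (hm₁ : dist S₁₂m Z₁ = d₁) (hm₂ : dist S₁₂m Z₂ = d₂)
    (hne : S₁₂p ≠ S₁₂m) :
    Real.sqrt ((dist Z₃ S₁₂p ^ 2 + dist Z₃ S₁₂m ^ 2) / 2) =
      Real.sqrt (d₁ ^ 2 + dist Z₁ Z₃ ^ 2 - dist Z₁ Z₂ ^ 2 / 2) :=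
  stmt_2_general Z₁ Z₂ Z₃ S₁₂p S₁₂m d₁ d₂ hiso hd hZ hp₁ hp₂ hm₁ hm₂ hne
end

section
/- Suppose ||Z_1 - Z_3|| = ||Z_2 - Z_3||, d_1 = d_2, and the circles S_2 and S_3 intersect at two points S_{23+} (closer to Z_1) and S_{23-} (farther from Z_1). Then (1/2)||Z_1 - S_{23+}||² + (1/2)||Z_1 - S_{23-}||² = d_1² + (||Z_1 - Z_2||² / (2||Z_1 - Z_3||²)) · (d_3² + ||Z_1 - Z_3||² - d_1²). In particular, d_1² < (1/2)||Z_1 - S_{23+}||² + (1/2)||Z_1 - S_{23-}||² if and only if d_1² < d_3² + ||Z_1 - Z_3||². -/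
/-!
In the plane, two points `p ≠ m` at equal distances from both `c₂` and `c₃` have
`(p - c₃) + (m - c₃)` parallel to `c₂ - c₃`: both vectors are orthogonal to `m - p`. Pairing this
with `c₂ - c₃` fixes the scalar factor, and expanding `‖z - p‖² + ‖z - m‖²` then gives the sum of
squared distances from an arbitrary point `z` in terms of distances among `z, c₂, c₃, p` alone.
For `z = Z₁` the isosceles condition and `d₁ = d₂` reduce it to the stated formula, in which `d₁²`
is shifted by a positive multiple of `d₃² + ‖Z₁ - Z₃‖² - d₁²`.
-/

open Module RealInnerProductSpace EuclideanGeometry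

variable {V P : Type*} [NormedAddCommGroup V] [InnerProductSpace ℝ V] [MetricSpace P]
  [NormedAddTorsor V P]

theorem exists_eq_smul_of_inner_eq_zero_of_finrank_eq_two (hd : finrank ℝ V = 2) {x a b : V}
    (hx : x ≠ 0) (ha : a ≠ 0) (hxa : ⟪x, a⟫ = 0) (hxb : ⟪x, b⟫ = 0) : ∃ t : ℝ, b = t • a := by
  have : Fact (finrank ℝ V = 1 + 1) := ⟨hd⟩
  have hrank : finrank ℝ (ℝ ∙ x)ᗮ = 1 := Submodule.finrank_orthogonal_span_singleton hx
  let a' : (ℝ ∙ x)ᗮ := ⟨a, Submodule.mem_orthogonal_singleton_iff_inner_right.mpr hxa⟩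
  let b' : (ℝ ∙ x)ᗮ := ⟨b, Submodule.mem_orthogonal_singleton_iff_inner_right.mpr hxb⟩
  obtain ⟨t, ht⟩ := (finrank_eq_one_iff_of_nonzero' a' (by simpa [a'] using ha)).mp hrank b'
  exact ⟨t, by simpa [a', b'] using congrArg Subtype.val ht.symm⟩

theorem exists_vsub_add_vsub_eq_smul_of_dist_eq (hd : finrank ℝ V = 2) {c₁ c₂ p₁ p₂ : P}
    (hc : c₁ ≠ c₂) (hp : p₁ ≠ p₂) (h₁ : dist p₁ c₁ = dist p₂ c₁)
    (h₂ : dist p₁ c₂ = dist p₂ c₂) : ∃ t : ℝ, (p₁ -ᵥ c₂) + (p₂ -ᵥ c₂) = t • (c₁ -ᵥ c₂) := by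
  refine exists_eq_smul_of_inner_eq_zero_of_finrank_eq_two hd (vsub_ne_zero.mpr hp.symm)
    (vsub_ne_zero.mpr hc) ?_ ?_
  · rw [real_inner_comm]
    exact inner_vsub_vsub_of_dist_eq_of_dist_eq h₂ h₁
  · rw [← vsub_sub_vsub_cancel_right p₂ p₁ c₂, inner_sub_left, inner_add_right, inner_add_right,
      real_inner_self_eq_norm_sq, real_inner_self_eq_norm_sq, ← dist_eq_norm_vsub,
      ← dist_eq_norm_vsub, h₂, real_inner_comm]
    ring

theorem dist_sq_add_dist_sq_of_dist_eq (hd : finrank ℝ V = 2) (z : P) {c₂ c₃ p m : P}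
    (hc : c₂ ≠ c₃) (hpm : p ≠ m) (h₂ : dist p c₂ = dist m c₂) (h₃ : dist p c₃ = dist m c₃) :
    dist z p ^ 2 + dist z m ^ 2 = 2 * dist z c₃ ^ 2 + 2 * dist p c₃ ^ 2 -
      (dist p c₃ ^ 2 + dist c₂ c₃ ^ 2 - dist p c₂ ^ 2) *
        (dist z c₃ ^ 2 + dist c₂ c₃ ^ 2 - dist z c₂ ^ 2) / dist c₂ c₃ ^ 2 := by
  obtain ⟨t, ht⟩ := exists_vsub_add_vsub_eq_smul_of_dist_eq hd hc hpm h₂ h₃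
  have hsub (x y : P) : dist x y = ‖(x -ᵥ c₃) - (y -ᵥ c₃)‖ := by
    rw [vsub_sub_vsub_cancel_right, dist_eq_norm_vsub V]
  have hu : dist c₂ c₃ ≠ 0 := dist_ne_zero.mpr hc
  rw [hsub p c₂, hsub m c₂] at h₂
  rw [dist_eq_norm_vsub V, dist_eq_norm_vsub V] at h₃
  rw [dist_eq_norm_vsub V] at hu
  rw [dist_eq_norm_vsub V z c₃, dist_eq_norm_vsub V p c₃, dist_eq_norm_vsub V c₂ c₃, hsub z p,
    hsub z m, hsub p c₂, hsub z c₂]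
  set w := z -ᵥ c₃
  set u := c₂ -ᵥ c₃
  set a := p -ᵥ c₃
  set b := m -ᵥ c₃
  have hw : ⟪w, a⟫ + ⟪w, b⟫ = t * ⟪w, u⟫ := by
    rw [← inner_add_right, ht, real_inner_smul_right]
  have hu' : ⟪a, u⟫ + ⟪b, u⟫ = t * ‖u‖ ^ 2 := by
    rw [← inner_add_left, ht, real_inner_smul_left, real_inner_self_eq_norm_sq]
  have hn : ‖a‖ ^ 2 = ‖b‖ ^ 2 := by rw [h₃]
  have hnu := congrArg (· ^ 2) h₂
  simp only [norm_sub_sq_real] at hnu ⊢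
  field_simp
  linear_combination
    (-2) * ‖u‖ ^ 2 * hw + 2 * ⟪w, u⟫ * hu' + (⟪w, u⟫ - ‖u‖ ^ 2) * hn - ⟪w, u⟫ * hnu

theorem stmt_3_general (Z₁ Z₂ Z₃ S₂₃p S₂₃m : EuclideanSpace ℝ (Fin 2)) (d₁ d₂ d₃ : ℝ)
    (hiso : dist Z₁ Z₃ = dist Z₂ Z₃) (hd : d₁ = d₂)
    (hZ12 : Z₁ ≠ Z₂) (hZ13 : Z₁ ≠ Z₃)
    (hp₂ : dist S₂₃p Z₂ = d₂) (hp₃ : dist S₂₃p Z₃ = d₃)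
    (hm₂ : dist S₂₃m Z₂ = d₂) (hm₃ : dist S₂₃m Z₃ = d₃)
    (hne : S₂₃p ≠ S₂₃m) :
    (1 / 2) * dist Z₁ S₂₃p ^ 2 + (1 / 2) * dist Z₁ S₂₃m ^ 2 =
      d₁ ^ 2 + (dist Z₁ Z₂ ^ 2 / (2 * dist Z₁ Z₃ ^ 2)) *
        (d₃ ^ 2 + dist Z₁ Z₃ ^ 2 - d₁ ^ 2) ∧
    (d₁ ^ 2 < (1 / 2) * dist Z₁ S₂₃p ^ 2 + (1 / 2) * dist Z₁ S₂₃m ^ 2 ↔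
      d₁ ^ 2 < d₃ ^ 2 + dist Z₁ Z₃ ^ 2) := by
  have hL : dist Z₁ Z₃ ≠ 0 := dist_ne_zero.mpr hZ13
  have hZ23 : Z₂ ≠ Z₃ := dist_ne_zero.mp (hiso ▸ hL)
  have hsum := dist_sq_add_dist_sq_of_dist_eq finrank_euclideanSpace_fin Z₁ hZ23 hne
    (hp₂.trans hm₂.symm) (hp₃.trans hm₃.symm)
  rw [← hiso, hp₂, hp₃, ← hd] at hsum
  have hmean : (1 / 2) * dist Z₁ S₂₃p ^ 2 + (1 / 2) * dist Z₁ S₂₃m ^ 2 =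
      d₁ ^ 2 + (dist Z₁ Z₂ ^ 2 / (2 * dist Z₁ Z₃ ^ 2)) * (d₃ ^ 2 + dist Z₁ Z₃ ^ 2 - d₁ ^ 2) := by
    field_simp at hsum ⊢
    linear_combination hsum
  have hcoeff : 0 < dist Z₁ Z₂ ^ 2 / (2 * dist Z₁ Z₃ ^ 2) := by
    have := dist_pos.mpr hZ12
    positivity
  refine ⟨hmean, ?_⟩
  rw [hmean, lt_add_iff_pos_right, mul_pos_iff_of_pos_left hcoeff, sub_pos]

theorem stmt_3 (Z₁ Z₂ Z₃ S₂₃p S₂₃m : EuclideanSpace ℝ (Fin 2)) (d₁ d₂ d₃ : ℝ)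
    (hd₁ : 0 < d₁) (hd₃ : 0 < d₃)
    (hiso : dist Z₁ Z₃ = dist Z₂ Z₃) (hd : d₁ = d₂)
    (hZ12 : Z₁ ≠ Z₂) (hZ13 : Z₁ ≠ Z₃)
    (hp₂ : dist S₂₃p Z₂ = d₂) (hp₃ : dist S₂₃p Z₃ = d₃)
    (hm₂ : dist S₂₃m Z₂ = d₂) (hm₃ : dist S₂₃m Z₃ = d₃)
    (hne : S₂₃p ≠ S₂₃m)
    (hord : dist Z₁ S₂₃p ≤ dist Z₁ S₂₃m) :
    (1 / 2) * dist Z₁ S₂₃p ^ 2 + (1 / 2) * dist Z₁ S₂₃m ^ 2 =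
      d₁ ^ 2 + (dist Z₁ Z₂ ^ 2 / (2 * dist Z₁ Z₃ ^ 2)) *
        (d₃ ^ 2 + dist Z₁ Z₃ ^ 2 - d₁ ^ 2) ∧
    (d₁ ^ 2 < (1 / 2) * dist Z₁ S₂₃p ^ 2 + (1 / 2) * dist Z₁ S₂₃m ^ 2 ↔
      d₁ ^ 2 < d₃ ^ 2 + dist Z₁ Z₃ ^ 2) :=
  stmt_3_general Z₁ Z₂ Z₃ S₂₃p S₂₃m d₁ d₂ d₃ hiso hd hZ12 hZ13 hp₂ hp₃ hm₂ hm₃ hne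
end

section
/- Suppose the triangle Z_1 Z_2 Z_3 is equilateral with side length r, and d_1 = d_2 = d_3 = d. If d ≤ r/√3, then the centroid Y_0 = (Z_1+Z_2+Z_3)/3 is a global minimizer of O(W) = Σ_{j=1}^{3} |d² - ||W - Z_j||²|, and O(Y_0) = 3(r²/3 - d²) (in particular O(Y_0) = r² - 3d²). -/
/-!
The key fact is Leibniz's identity: for the centroid `G` of `Z₁ Z₂ Z₃`,
`∑ ‖W - Zⱼ‖² = 3 ‖W - G‖² + ∑ ‖G - Zⱼ‖²`, so `G` minimises the sum of squared
distances. Since `|d² - t| ≥ t - d²`, the objective is bounded below by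
`∑ ‖W - Zⱼ‖² - 3d²`, hence by `∑ ‖G - Zⱼ‖² - 3d²`, and this bound is attained at
`G` as soon as `d` is at most the distance from `G` to each vertex. For an equilateral
triangle of side `r`, Leibniz's identity evaluated at the three vertices gives
`‖G - Zⱼ‖² = r² / 3`.
-/

section Centroid

variable {E : Type*} [NormedAddCommGroup E] [InnerProductSpace ℝ E]

theorem sum_dist_sq_eq_three_mul_dist_centroid_sq_add {Z₁ Z₂ Z₃ G : E}
    (hG : G = (3 : ℝ)⁻¹ • (Z₁ + Z₂ + Z₃)) (W : E) :
    dist W Z₁ ^ 2 + dist W Z₂ ^ 2 + dist W Z₃ ^ 2 =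
      3 * dist W G ^ 2 + (dist G Z₁ ^ 2 + dist G Z₂ ^ 2 + dist G Z₃ ^ 2) := by
  have hsum : (G - Z₁) + (G - Z₂) + (G - Z₃) = 0 := by
    rw [hG]; module
  have hcross : ∀ Z : E,
      dist W Z ^ 2 = dist W G ^ 2 + 2 * inner ℝ (W - G) (G - Z) + dist G Z ^ 2 := by
    intro Z
    simp only [dist_eq_norm]
    rw [← norm_add_sq_real, sub_add_sub_cancel]
  have hinner : inner ℝ (W - G) (G - Z₁) + inner ℝ (W - G) (G - Z₂) +
      inner ℝ (W - G) (G - Z₃) = 0 := by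
    rw [← inner_add_right, ← inner_add_right, hsum, inner_zero_right]
  rw [hcross Z₁, hcross Z₂, hcross Z₃]
  linear_combination 2 * hinner

theorem dist_centroid_sq_of_equilateral {Z₁ Z₂ Z₃ G : E} {r : ℝ}
    (h12 : dist Z₁ Z₂ = r) (h23 : dist Z₂ Z₃ = r) (h31 : dist Z₃ Z₁ = r)
    (hG : G = (3 : ℝ)⁻¹ • (Z₁ + Z₂ + Z₃)) :
    dist G Z₁ ^ 2 = r ^ 2 / 3 ∧ dist G Z₂ ^ 2 = r ^ 2 / 3 ∧
      dist G Z₃ ^ 2 = r ^ 2 / 3 := by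
  have h1 := sum_dist_sq_eq_three_mul_dist_centroid_sq_add hG Z₁
  have h2 := sum_dist_sq_eq_three_mul_dist_centroid_sq_add hG Z₂
  have h3 := sum_dist_sq_eq_three_mul_dist_centroid_sq_add hG Z₃
  simp only [dist_self, dist_comm Z₂ Z₁, dist_comm Z₃ Z₂, dist_comm Z₁ Z₃,
    dist_comm _ G, h12, h23, h31] at h1 h2 h3
  refine ⟨?_, ?_, ?_⟩ <;> linarith

theorem sum_abs_sub_dist_centroid_sq_le {Z₁ Z₂ Z₃ G : E} {d : ℝ}
    (hG : G = (3 : ℝ)⁻¹ • (Z₁ + Z₂ + Z₃))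
    (h₁ : d ^ 2 ≤ dist G Z₁ ^ 2) (h₂ : d ^ 2 ≤ dist G Z₂ ^ 2)
    (h₃ : d ^ 2 ≤ dist G Z₃ ^ 2) (W : E) :
    |d ^ 2 - dist G Z₁ ^ 2| + |d ^ 2 - dist G Z₂ ^ 2| + |d ^ 2 - dist G Z₃ ^ 2| ≤
      |d ^ 2 - dist W Z₁ ^ 2| + |d ^ 2 - dist W Z₂ ^ 2| + |d ^ 2 - dist W Z₃ ^ 2| := by
  rw [abs_of_nonpos (sub_nonpos.2 h₁), abs_of_nonpos (sub_nonpos.2 h₂),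
    abs_of_nonpos (sub_nonpos.2 h₃)]
  have hleibniz := sum_dist_sq_eq_three_mul_dist_centroid_sq_add hG W
  linarith [neg_abs_le (d ^ 2 - dist W Z₁ ^ 2), neg_abs_le (d ^ 2 - dist W Z₂ ^ 2),
    neg_abs_le (d ^ 2 - dist W Z₃ ^ 2), sq_nonneg (dist W G)]

end Centroid

theorem sq_le_div_three_of_le_div_sqrt_three {d r : ℝ} (hd : 0 ≤ d)
    (h : d ≤ r / Real.sqrt 3) : d ^ 2 ≤ r ^ 2 / 3 := by
  calc d ^ 2 ≤ (r / Real.sqrt 3) ^ 2 := pow_le_pow_left₀ hd h 2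
    _ = r ^ 2 / 3 := by rw [div_pow, Real.sq_sqrt (by norm_num)]

theorem stmt_6_general (Z₁ Z₂ Z₃ Y₀ : EuclideanSpace ℝ (Fin 2)) (r d : ℝ)
    (hd : 0 < d)
    (h12 : dist Z₁ Z₂ = r) (h23 : dist Z₂ Z₃ = r) (h31 : dist Z₃ Z₁ = r)
    (hdle : d ≤ r / Real.sqrt 3)
    (hY₀ : Y₀ = (3 : ℝ)⁻¹ • (Z₁ + Z₂ + Z₃))
    (O : EuclideanSpace ℝ (Fin 2) → ℝ)
    (hO : ∀ W, O W = |d ^ 2 - dist W Z₁ ^ 2| + |d ^ 2 - dist W Z₂ ^ 2| +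
      |d ^ 2 - dist W Z₃ ^ 2|) :
    (∀ W, O Y₀ ≤ O W) ∧ O Y₀ = 3 * (r ^ 2 / 3 - d ^ 2) := by
  have hd2 := sq_le_div_three_of_le_div_sqrt_three hd.le hdle
  obtain ⟨h₁, h₂, h₃⟩ := dist_centroid_sq_of_equilateral h12 h23 h31 hY₀
  refine ⟨fun W => ?_, ?_⟩
  · rw [hO, hO]
    exact sum_abs_sub_dist_centroid_sq_le hY₀ (h₁ ▸ hd2) (h₂ ▸ hd2) (h₃ ▸ hd2) W
  · rw [hO, h₁, h₂, h₃, abs_of_nonpos (sub_nonpos.2 hd2)]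
    ring

theorem stmt_6 (Z₁ Z₂ Z₃ Y₀ : EuclideanSpace ℝ (Fin 2)) (r d : ℝ)
    (hr : 0 < r) (hd : 0 < d)
    (h12 : dist Z₁ Z₂ = r) (h23 : dist Z₂ Z₃ = r) (h31 : dist Z₃ Z₁ = r)
    (hdle : d ≤ r / Real.sqrt 3)
    (hY₀ : Y₀ = (3 : ℝ)⁻¹ • (Z₁ + Z₂ + Z₃))
    (O : EuclideanSpace ℝ (Fin 2) → ℝ)
    (hO : ∀ W, O W = |d ^ 2 - dist W Z₁ ^ 2| + |d ^ 2 - dist W Z₂ ^ 2| +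
      |d ^ 2 - dist W Z₃ ^ 2|) :
    (∀ W, O Y₀ ≤ O W) ∧ O Y₀ = 3 * (r ^ 2 / 3 - d ^ 2) :=
  stmt_6_general Z₁ Z₂ Z₃ Y₀ r d hd h12 h23 h31 hdle hY₀ O hO
end

section
/- Suppose the triangle Z_1 Z_2 Z_3 is equilateral with side length r, d_1 = d_2 = d_3 = d with d > r/√3. The global minimizers of O(W) = Σ_{j=1}^{3} |d² - ||W - Z_j||²| are exactly the three points S_{12+}, S_{23+}, S_{31+}, i.e., for each pair of circles the intersection point closer to the opposite vertex. -/
/-!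
Put `u_j = d² - ‖W - Z_j‖²`, so that `O W = |u₁| + |u₂| + |u₃|`, and write
`3 d² = r² (m² + m + 1)` with `m > 0`, which is possible exactly because `d > r / √3`.
For `W` in the plane, the classical relation
`3 (Σ ‖W - Z_j‖⁴ + r⁴) = (Σ ‖W - Z_j‖² + r²)²` becomes
`2 r² (u₁ + u₂ + u₃) = 2 r² M + 2 M² - Σ (u_i - u_j)²` with `M = r² m`.
The three differences `u_i - u_j` sum to zero, so one of them has square at least half the sum
of their squares; hence either some `|u_i - u_j| ≥ M` or `u₁ + u₂ + u₃ > M`. Either way `O ≥ M`,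
and `O W = M` forces two of the `u_j` to vanish and the third to equal `M`. On the circles about
`Z₁` and `Z₂` the relation leaves only `u₃ ∈ {M, -(M + r²)}`; the value `M` is attained, so it is
the value at the nearer intersection point `S₁₂`. A point of the plane is determined by its
distances to the three vertices, so the minimizers are exactly `S₁₂`, `S₂₃`, `S₃₁`.
-/

open Module
open scoped RealInnerProductSpace

lemma sum_sq_sub_le_two_mul_sq (a b c : ℝ) :
    (a - b) ^ 2 + (b - c) ^ 2 + (c - a) ^ 2 ≤ 2 * (a - b) ^ 2 ∨
      (a - b) ^ 2 + (b - c) ^ 2 + (c - a) ^ 2 ≤ 2 * (b - c) ^ 2 ∨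
      (a - b) ^ 2 + (b - c) ^ 2 + (c - a) ^ 2 ≤ 2 * (c - a) ^ 2 := by
  rcases le_or_gt 0 ((b - c) * (c - a)) with h | h
  · left; nlinarith
  rcases le_or_gt 0 ((c - a) * (a - b)) with h' | h'
  · right; left; nlinarith
  · right; right
    have : 0 < (a - b) * (b - c) := by
      nlinarith [mul_pos_of_neg_of_neg h h', sq_nonneg (c - a)]
    nlinarith

lemma abs_add_abs_add_abs_ge_and_eq_of_sq_le {k M a b c : ℝ} (hk : 0 < k)
    (h : M ^ 2 - (a - b) ^ 2 ≤ k * (a + b + c - M)) :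
    M ≤ |a| + |b| + |c| ∧
      (|a| + |b| + |c| = M → c = 0 ∧ (a = 0 ∧ b = M ∨ b = 0 ∧ a = M)) := by
  have hab : |a - b| ≤ |a| + |b| := abs_sub _ _
  have hsum : a + b + c ≤ |a| + |b| + |c| := by
    linarith [le_abs_self a, le_abs_self b, le_abs_self c]
  constructor
  · by_contra! hlt
    have : |a - b| < M := by linarith [abs_nonneg c]
    nlinarith [abs_nonneg (a - b), sq_abs (a - b)]
  · intro heq
    have hM : M ≤ |a - b| := by
      by_contra! hlt
      nlinarith [abs_nonneg (a - b), sq_abs (a - b)]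
    have hc : c = 0 := abs_eq_zero.1 (by linarith [abs_nonneg c])
    have hdiff : (a - b) ^ 2 = M ^ 2 := by
      rw [← sq_abs, le_antisymm (by linarith [abs_nonneg c]) hM]
    have hge : M ≤ a + b + c := by nlinarith
    have ha : 0 ≤ a := by linarith [abs_nonneg a, le_abs_self b, le_abs_self c]
    have hb : 0 ≤ b := by linarith [abs_nonneg b, le_abs_self a, le_abs_self c]
    rw [abs_of_nonneg ha, abs_of_nonneg hb, hc, abs_zero] at heq
    refine ⟨hc, ?_⟩
    rcases le_total a b with hle | hle
    · rw [abs_of_nonpos (by linarith)] at hM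
      left; constructor <;> linarith
    · rw [abs_of_nonneg (by linarith)] at hM
      right; constructor <;> linarith

lemma abs_add_abs_add_abs_ge_and_eq {k M u₁ u₂ u₃ : ℝ} (hk : 0 < k)
    (h : 2 * k * (u₁ + u₂ + u₃) =
      2 * k * M + 2 * M ^ 2 - ((u₁ - u₂) ^ 2 + (u₂ - u₃) ^ 2 + (u₃ - u₁) ^ 2)) :
    M ≤ |u₁| + |u₂| + |u₃| ∧ (|u₁| + |u₂| + |u₃| = M →
      (u₁ = 0 ∧ u₂ = 0 ∧ u₃ = M) ∨ (u₂ = 0 ∧ u₃ = 0 ∧ u₁ = M) ∨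
        (u₃ = 0 ∧ u₁ = 0 ∧ u₂ = M)) := by
  rcases sum_sq_sub_le_two_mul_sq u₁ u₂ u₃ with hs | hs | hs
  · obtain ⟨hle, heq⟩ :=
      abs_add_abs_add_abs_ge_and_eq_of_sq_le (M := M) (a := u₁) (b := u₂) (c := u₃) hk
        (by linarith)
    exact ⟨hle, fun hM => by have := heq hM; tauto⟩
  · obtain ⟨hle, heq⟩ :=
      abs_add_abs_add_abs_ge_and_eq_of_sq_le (M := M) (a := u₂) (b := u₃) (c := u₁) hk
        (by linarith)
    exact ⟨by linarith, fun hM => by have := heq (by linarith); tauto⟩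
  · obtain ⟨hle, heq⟩ :=
      abs_add_abs_add_abs_ge_and_eq_of_sq_le (M := M) (a := u₃) (b := u₁) (c := u₂) hk
        (by linarith)
    exact ⟨by linarith, fun hM => by have := heq (by linarith); tauto⟩

def IsEquilateral {P : Type*} [Dist P] (Z₁ Z₂ Z₃ : P) (r : ℝ) : Prop :=
  dist Z₁ Z₂ = r ∧ dist Z₂ Z₃ = r ∧ dist Z₃ Z₁ = r

lemma IsEquilateral.rotate {P : Type*} [Dist P] {Z₁ Z₂ Z₃ : P} {r : ℝ}
    (h : IsEquilateral Z₁ Z₂ Z₃ r) : IsEquilateral Z₂ Z₃ Z₁ r :=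
  ⟨h.2.1, h.2.2, h.1⟩

variable {E : Type*} [NormedAddCommGroup E] [InnerProductSpace ℝ E]

namespace IsEquilateral

variable {Z₁ Z₂ Z₃ : E} {r : ℝ}

lemma inner_sub_sub (h : IsEquilateral Z₁ Z₂ Z₃ r) : ⟪Z₂ - Z₁, Z₃ - Z₁⟫ = r ^ 2 / 2 := by
  have h₂₃ := norm_sub_sq_real (Z₂ - Z₁) (Z₃ - Z₁)
  rw [sub_sub_sub_cancel_right, ← dist_eq_norm, ← dist_eq_norm, ← dist_eq_norm, h.2.1,
    dist_comm, h.1, h.2.2] at h₂₃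
  linarith

lemma norm_smul_add_smul_sq (h : IsEquilateral Z₁ Z₂ Z₃ r) (a b : ℝ) :
    ‖a • (Z₂ - Z₁) + b • (Z₃ - Z₁)‖ ^ 2 = r ^ 2 * (a ^ 2 + a * b + b ^ 2) := by
  have hA : ⟪Z₂ - Z₁, Z₂ - Z₁⟫ = r ^ 2 := by
    rw [real_inner_self_eq_norm_sq, ← dist_eq_norm, dist_comm, h.1]
  have hB : ⟪Z₃ - Z₁, Z₃ - Z₁⟫ = r ^ 2 := by
    rw [real_inner_self_eq_norm_sq, ← dist_eq_norm, h.2.2]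
  rw [← real_inner_self_eq_norm_sq]
  simp only [inner_add_add_self, real_inner_smul_left, real_inner_smul_right,
    real_inner_comm (Z₂ - Z₁), h.inner_sub_sub, hA, hB]
  ring

lemma dist_sq_of_sub_eq (h : IsEquilateral Z₁ Z₂ Z₃ r) {W : E} {a b : ℝ}
    (hW : W - Z₁ = a • (Z₂ - Z₁) + b • (Z₃ - Z₁)) :
    dist W Z₁ ^ 2 = r ^ 2 * (a ^ 2 + a * b + b ^ 2) ∧
      dist W Z₂ ^ 2 = r ^ 2 * ((a - 1) ^ 2 + (a - 1) * b + b ^ 2) ∧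
      dist W Z₃ ^ 2 = r ^ 2 * (a ^ 2 + a * (b - 1) + (b - 1) ^ 2) := by
  have h₂ : W - Z₂ = (a - 1) • (Z₂ - Z₁) + b • (Z₃ - Z₁) := by
    rw [← sub_sub_sub_cancel_right W Z₂ Z₁, hW]; module
  have h₃ : W - Z₃ = a • (Z₂ - Z₁) + (b - 1) • (Z₃ - Z₁) := by
    rw [← sub_sub_sub_cancel_right W Z₃ Z₁, hW]; module
  simp only [dist_eq_norm, hW, h₂, h₃, h.norm_smul_add_smul_sq, and_self]

lemma exists_eq_smul_add_smul (hE : finrank ℝ E = 2) (h : IsEquilateral Z₁ Z₂ Z₃ r)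
    (hr : r ≠ 0) (v : E) : ∃ a b : ℝ, v = a • (Z₂ - Z₁) + b • (Z₃ - Z₁) := by
  have hli : LinearIndependent ℝ ![Z₂ - Z₁, Z₃ - Z₁] := by
    refine LinearIndependent.pair_iff.2 fun a b hab => ?_
    have h0 := h.norm_smul_add_smul_sq a b
    rw [hab, norm_zero] at h0
    have : a ^ 2 + a * b + b ^ 2 = 0 := by
      simpa [hr] using h0.symm
    constructor <;> nlinarith [sq_nonneg (a + b), sq_nonneg a, sq_nonneg b]
  have hspan := hli.span_eq_top_of_card_eq_finrank (by simp [hE])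
  rw [Matrix.range_cons, Matrix.range_cons, Matrix.range_empty, Set.union_empty,
    Set.singleton_union] at hspan
  obtain ⟨a, b, hab⟩ := Submodule.mem_span_pair.1 (hspan ▸ Submodule.mem_top (x := v))
  exact ⟨a, b, hab.symm⟩

lemma three_mul_sum_dist_pow_four (hE : finrank ℝ E = 2) (h : IsEquilateral Z₁ Z₂ Z₃ r)
    (hr : r ≠ 0) (W : E) :
    3 * (dist W Z₁ ^ 4 + dist W Z₂ ^ 4 + dist W Z₃ ^ 4 + r ^ 4) =
      (dist W Z₁ ^ 2 + dist W Z₂ ^ 2 + dist W Z₃ ^ 2 + r ^ 2) ^ 2 := by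
  obtain ⟨a, b, hW⟩ := h.exists_eq_smul_add_smul hE hr (W - Z₁)
  obtain ⟨h₁, h₂, h₃⟩ := h.dist_sq_of_sub_eq hW
  have e (x : ℝ) : x ^ 4 = (x ^ 2) ^ 2 := by ring
  rw [e (dist W Z₁), e (dist W Z₂), e (dist W Z₃), h₁, h₂, h₃]
  ring

lemma eq_of_dist_sq_eq (hE : finrank ℝ E = 2) (h : IsEquilateral Z₁ Z₂ Z₃ r) (hr : r ≠ 0)
    {P Q : E} (h₁ : dist P Z₁ ^ 2 = dist Q Z₁ ^ 2) (h₂ : dist P Z₂ ^ 2 = dist Q Z₂ ^ 2)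
    (h₃ : dist P Z₃ ^ 2 = dist Q Z₃ ^ 2) : P = Q := by
  have e {Z : E} (hZ : dist P Z ^ 2 = dist Q Z ^ 2) : dist P Z = dist Q Z :=
    (sq_eq_sq₀ dist_nonneg dist_nonneg).1 hZ
  have hA := EuclideanGeometry.inner_vsub_vsub_of_dist_eq_of_dist_eq (e h₁) (e h₂)
  have hB := EuclideanGeometry.inner_vsub_vsub_of_dist_eq_of_dist_eq (e h₁) (e h₃)
  rw [vsub_eq_sub, vsub_eq_sub] at hA hB
  obtain ⟨a, b, hab⟩ := h.exists_eq_smul_add_smul hE hr (Q - P)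
  have : ‖Q - P‖ ^ 2 = 0 := by
    rw [← real_inner_self_eq_norm_sq]
    nth_rw 1 [hab]
    rw [inner_add_left, real_inner_smul_left, real_inner_smul_left, hA, hB]
    ring
  exact (sub_eq_zero.1 (norm_eq_zero.1 (pow_eq_zero_iff two_ne_zero |>.1 this))).symm

variable {d m : ℝ}

lemma le_sum_abs_sq_sub_dist_sq_and_eq (hE : finrank ℝ E = 2) (h : IsEquilateral Z₁ Z₂ Z₃ r)
    (hr : r ≠ 0) (hd : 3 * d ^ 2 = r ^ 2 * (m ^ 2 + m + 1)) (W : E) :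
    r ^ 2 * m ≤ |d ^ 2 - dist W Z₁ ^ 2| + |d ^ 2 - dist W Z₂ ^ 2| + |d ^ 2 - dist W Z₃ ^ 2| ∧
      (|d ^ 2 - dist W Z₁ ^ 2| + |d ^ 2 - dist W Z₂ ^ 2| + |d ^ 2 - dist W Z₃ ^ 2| =
          r ^ 2 * m →
        (dist W Z₁ ^ 2 = d ^ 2 ∧ dist W Z₂ ^ 2 = d ^ 2 ∧ d ^ 2 - dist W Z₃ ^ 2 = r ^ 2 * m) ∨
        (dist W Z₂ ^ 2 = d ^ 2 ∧ dist W Z₃ ^ 2 = d ^ 2 ∧ d ^ 2 - dist W Z₁ ^ 2 = r ^ 2 * m) ∨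
        (dist W Z₃ ^ 2 = d ^ 2 ∧ dist W Z₁ ^ 2 = d ^ 2 ∧ d ^ 2 - dist W Z₂ ^ 2 = r ^ 2 * m)) := by
  obtain ⟨hle, heq⟩ := abs_add_abs_add_abs_ge_and_eq (k := r ^ 2) (M := r ^ 2 * m)
    (u₁ := d ^ 2 - dist W Z₁ ^ 2) (u₂ := d ^ 2 - dist W Z₂ ^ 2) (u₃ := d ^ 2 - dist W Z₃ ^ 2)
    (by positivity)
    (by linear_combination 2 * r ^ 2 * hd + h.three_mul_sum_dist_pow_four hE hr W)
  refine ⟨hle, fun hW => ?_⟩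
  simp only [sub_eq_zero, eq_comm (a := d ^ 2)] at heq
  exact heq hW

lemma exists_dist_eq_dist_eq (h : IsEquilateral Z₁ Z₂ Z₃ r) (hd0 : 0 ≤ d)
    (hd : 3 * d ^ 2 = r ^ 2 * (m ^ 2 + m + 1)) :
    ∃ N : E, dist N Z₁ = d ∧ dist N Z₂ = d ∧ d ^ 2 - dist N Z₃ ^ 2 = r ^ 2 * m := by
  set N : E := Z₁ + ((1 - m) / 3) • (Z₂ - Z₁) + ((1 + 2 * m) / 3) • (Z₃ - Z₁) with hN
  obtain ⟨h₁, h₂, h₃⟩ := h.dist_sq_of_sub_eq (W := N) (by rw [hN]; abel)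
  refine ⟨N, ?_, ?_, ?_⟩
  · rw [← sq_eq_sq₀ dist_nonneg hd0]; linear_combination h₁ - hd / 3
  · rw [← sq_eq_sq₀ dist_nonneg hd0]; linear_combination h₂ - hd / 3
  · linear_combination hd / 3 - h₃

lemma sq_sub_dist_sq_eq_or_of_dist_eq (hE : finrank ℝ E = 2) (h : IsEquilateral Z₁ Z₂ Z₃ r)
    (hr : r ≠ 0) (hd : 3 * d ^ 2 = r ^ 2 * (m ^ 2 + m + 1)) {P : E} (h₁ : dist P Z₁ = d)
    (h₂ : dist P Z₂ = d) :
    d ^ 2 - dist P Z₃ ^ 2 = r ^ 2 * m ∨ d ^ 2 - dist P Z₃ ^ 2 = -(r ^ 2 * (m + 1)) := by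
  have key := h.three_mul_sum_dist_pow_four hE hr P
  rw [h₁, h₂] at key
  have : (d ^ 2 - dist P Z₃ ^ 2 - r ^ 2 * m) *
      (d ^ 2 - dist P Z₃ ^ 2 + r ^ 2 * (m + 1)) = 0 := by
    linear_combination key / 2 + r ^ 2 * hd
  rcases mul_eq_zero.1 this with e | e
  · exact Or.inl (by linarith)
  · exact Or.inr (by linarith)

lemma sq_sub_dist_sq_of_isClosest (hE : finrank ℝ E = 2) (h : IsEquilateral Z₁ Z₂ Z₃ r)
    (hr : r ≠ 0) (hd0 : 0 ≤ d) (hd : 3 * d ^ 2 = r ^ 2 * (m ^ 2 + m + 1)) (hm : 0 ≤ m) {S : E}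
    (hS : dist S Z₁ = d ∧ dist S Z₂ = d ∧
      ∀ P, dist P Z₁ = d → dist P Z₂ = d → dist S Z₃ ≤ dist P Z₃) :
    d ^ 2 - dist S Z₃ ^ 2 = r ^ 2 * m := by
  obtain ⟨N, hN₁, hN₂, hN₃⟩ := h.exists_dist_eq_dist_eq hd0 hd
  have hle := pow_le_pow_left₀ dist_nonneg (hS.2.2 N hN₁ hN₂) 2
  refine (h.sq_sub_dist_sq_eq_or_of_dist_eq hE hr hd hS.1 hS.2.1).resolve_right fun hfar => ?_
  have : 0 < r ^ 2 := by positivity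
  nlinarith

lemma eq_of_isClosest (hE : finrank ℝ E = 2) (h : IsEquilateral Z₁ Z₂ Z₃ r) (hr : r ≠ 0)
    (hd0 : 0 ≤ d) (hd : 3 * d ^ 2 = r ^ 2 * (m ^ 2 + m + 1)) (hm : 0 ≤ m) {P S : E}
    (h₁ : dist P Z₁ ^ 2 = d ^ 2) (h₂ : dist P Z₂ ^ 2 = d ^ 2)
    (h₃ : d ^ 2 - dist P Z₃ ^ 2 = r ^ 2 * m)
    (hS : dist S Z₁ = d ∧ dist S Z₂ = d ∧
      ∀ P, dist P Z₁ = d → dist P Z₂ = d → dist S Z₃ ≤ dist P Z₃) :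
    P = S := by
  have hS₃ := h.sq_sub_dist_sq_of_isClosest hE hr hd0 hd hm hS
  exact h.eq_of_dist_sq_eq hE hr (by rw [h₁, hS.1]) (by rw [h₂, hS.2.1]) (by linarith)

end IsEquilateral

lemma exists_pos_sq_add_add_one_eq {x : ℝ} (hx : 1 < x) :
    ∃ m : ℝ, 0 < m ∧ m ^ 2 + m + 1 = x := by
  have hs := Real.sq_sqrt (by linarith : (0 : ℝ) ≤ 4 * x - 3)
  refine ⟨(√(4 * x - 3) - 1) / 2, ?_, by linear_combination hs / 4⟩
  have : 1 < √(4 * x - 3) := by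
    rw [show (1 : ℝ) = √1 by simp]
    exact Real.sqrt_lt_sqrt zero_le_one (by linarith)
  linarith

lemma exists_pos_three_mul_sq_eq {r d : ℝ} (hr : 0 < r) (hd : r / √3 < d) :
    ∃ m : ℝ, 0 < m ∧ 3 * d ^ 2 = r ^ 2 * (m ^ 2 + m + 1) := by
  have h3 : r ^ 2 < 3 * d ^ 2 := by
    have := (div_lt_iff₀ (by positivity)).1 hd
    nlinarith [Real.sq_sqrt (show (0 : ℝ) ≤ 3 by norm_num), Real.sqrt_nonneg 3]
  obtain ⟨m, hm, hx⟩ := exists_pos_sq_add_add_one_eq ((one_lt_div (by positivity)).2 h3)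
  exact ⟨m, hm, by rw [hx]; field_simp⟩

theorem stmt_7 (Z₁ Z₂ Z₃ S₁₂ S₂₃ S₃₁ : EuclideanSpace ℝ (Fin 2)) (r d : ℝ)
    (hr : 0 < r)
    (h12 : dist Z₁ Z₂ = r) (h23 : dist Z₂ Z₃ = r) (h31 : dist Z₃ Z₁ = r)
    (hdgt : r / Real.sqrt 3 < d)
    (hS₁₂ : dist S₁₂ Z₁ = d ∧ dist S₁₂ Z₂ = d ∧
      ∀ P, dist P Z₁ = d → dist P Z₂ = d → dist S₁₂ Z₃ ≤ dist P Z₃)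
    (hS₂₃ : dist S₂₃ Z₂ = d ∧ dist S₂₃ Z₃ = d ∧
      ∀ P, dist P Z₂ = d → dist P Z₃ = d → dist S₂₃ Z₁ ≤ dist P Z₁)
    (hS₃₁ : dist S₃₁ Z₃ = d ∧ dist S₃₁ Z₁ = d ∧
      ∀ P, dist P Z₃ = d → dist P Z₁ = d → dist S₃₁ Z₂ ≤ dist P Z₂)
    (O : EuclideanSpace ℝ (Fin 2) → ℝ)
    (hO : ∀ W, O W = |d ^ 2 - dist W Z₁ ^ 2| + |d ^ 2 - dist W Z₂ ^ 2| +
      |d ^ 2 - dist W Z₃ ^ 2|) :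
    {W | ∀ V, O W ≤ O V} = {S₁₂, S₂₃, S₃₁} := by
  have hT : IsEquilateral Z₁ Z₂ Z₃ r := ⟨h12, h23, h31⟩
  have hE : finrank ℝ (EuclideanSpace ℝ (Fin 2)) = 2 := finrank_euclideanSpace_fin
  have hd0 : 0 ≤ d := (div_nonneg hr.le (Real.sqrt_nonneg 3)).trans hdgt.le
  obtain ⟨m, hm, hd⟩ := exists_pos_three_mul_sq_eq hr hdgt
  have hmin (W) : r ^ 2 * m ≤ O W :=
    hO W ▸ (hT.le_sum_abs_sq_sub_dist_sq_and_eq hE hr.ne' hd W).1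
  have hM : |r ^ 2 * m| = r ^ 2 * m := abs_of_nonneg (by positivity)
  have hO₁₂ : O S₁₂ = r ^ 2 * m := by
    simp [hO, hS₁₂.1, hS₁₂.2.1, hM,
      hT.sq_sub_dist_sq_of_isClosest hE hr.ne' hd0 hd hm.le hS₁₂]
  have hO₂₃ : O S₂₃ = r ^ 2 * m := by
    simp [hO, hS₂₃.1, hS₂₃.2.1, hM,
      hT.rotate.sq_sub_dist_sq_of_isClosest hE hr.ne' hd0 hd hm.le hS₂₃]
  have hO₃₁ : O S₃₁ = r ^ 2 * m := by
    simp [hO, hS₃₁.1, hS₃₁.2.1, hM,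
      hT.rotate.rotate.sq_sub_dist_sq_of_isClosest hE hr.ne' hd0 hd hm.le hS₃₁]
  ext W
  refine ⟨fun hW => ?_, ?_⟩
  · have hWm : O W = r ^ 2 * m := le_antisymm (hO₁₂ ▸ hW S₁₂) (hmin W)
    rw [hO] at hWm
    rcases (hT.le_sum_abs_sq_sub_dist_sq_and_eq hE hr.ne' hd W).2 hWm with
      ⟨h₁, h₂, h₃⟩ | ⟨h₂, h₃, h₁⟩ | ⟨h₃, h₁, h₂⟩
    · exact Or.inl (hT.eq_of_isClosest hE hr.ne' hd0 hd hm.le h₁ h₂ h₃ hS₁₂)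
    · exact Or.inr (Or.inl (hT.rotate.eq_of_isClosest hE hr.ne' hd0 hd hm.le h₂ h₃ h₁ hS₂₃))
    · exact Or.inr (Or.inr
        (hT.rotate.rotate.eq_of_isClosest hE hr.ne' hd0 hd hm.le h₃ h₁ h₂ hS₃₁))
  · rintro (rfl | rfl | rfl) V
    · exact hO₁₂ ▸ hmin V
    · exact hO₂₃ ▸ hmin V
    · exact hO₃₁ ▸ hmin V
end

section
/- Suppose ||Z_1 - Z_3|| = ||Z_2 - Z_3||, d_1 = d_2, d_3² = d_1² - ||Z_1 - Z_3||², and d_1 > ||Z_1 - Z_3||. Writing r = ||Z_1 - Z_2|| and s the distance from Z_3 to the midpoint of Z_1 Z_2, the objective value at the intersection point S_{12+} of circles S_1 and S_2 closest to Z_3 is O(S_{12+}) = -2s² + 2s·sqrt(d_3² + s²), and at the farthest intersection point O(S_{12-}) = 2s² + 2s·sqrt(d_3² + s²). -/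
/-!
Let `M` be the midpoint of `Z₁Z₂`. By Apollonius's theorem every point `Y` of the perpendicular
bisector of `Z₁Z₂` satisfies `dist Y Z₁ ^ 2 = dist Y M ^ 2 + (r / 2) ^ 2`. Hence the common points
of the two circles of radius `d₁` are the points of the bisector at distance
`t = sqrt (d₁ ^ 2 - r ^ 2 / 4) = sqrt (d₃ ^ 2 + s ^ 2)` from `M`, and `Z₃` lies on the bisector at
distance `s ≤ t` from `M`. Along the bisector the nearest and farthest such points are at distance
`t - s` and `t + s` from `Z₃`, and the objective value reduces to `|d₃ ^ 2 - (t ∓ s) ^ 2|`.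
-/

open AffineMap AffineSubspace EuclideanGeometry

section ExtremalDistance

variable {V P : Type*} [NormedAddCommGroup V] [NormedSpace ℝ V] [MetricSpace P]
  [NormedAddTorsor V P] {S : AffineSubspace ℝ P} {M Z X : P}

-- The nearest point is found on the line through `M` and `Z`, beyond `Z`.
theorem dist_eq_sub_of_forall_dist_le (hM : M ∈ S) (hZ : Z ∈ S) (hZX : dist Z M ≤ dist X M)
    (hmin : ∀ Y ∈ S, dist Y M = dist X M → dist Z X ≤ dist Z Y) :
    dist Z X = dist X M - dist Z M := by
  refine le_antisymm ?_ (by linarith [dist_triangle X Z M, dist_comm X Z])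
  rcases eq_or_ne Z M with rfl | hZM
  · simp [dist_comm]
  have hZM' : 0 < dist Z M := dist_pos.mpr hZM
  obtain ⟨c, hcs⟩ : ∃ c : ℝ, c * dist Z M = dist X M := ⟨_, div_mul_cancel₀ _ hZM'.ne'⟩
  have hc : 1 ≤ c := le_of_mul_le_mul_right (by linarith) hZM'
  calc dist Z X ≤ dist Z (lineMap M Z c) := by
        refine hmin _ (AffineMap.lineMap_mem c hM hZ) ?_
        rw [dist_lineMap_left, Real.norm_of_nonneg (by linarith), dist_comm M Z, hcs]
    _ = dist X M - dist Z M := by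
        rw [dist_comm Z, dist_lineMap_right, Real.norm_of_nonpos (by linarith), dist_comm M Z]
        linear_combination hcs

-- The farthest point is found on the line through `M` and `Z`, on the far side of `M`.
theorem dist_eq_add_of_forall_dist_le (hM : M ∈ S) (hZ : Z ∈ S)
    (hmax : ∀ Y ∈ S, dist Y M = dist X M → dist Z Y ≤ dist Z X) :
    dist Z X = dist X M + dist Z M := by
  refine le_antisymm (by linarith [dist_triangle Z M X, dist_comm X M]) ?_
  rcases eq_or_ne Z M with rfl | hZM
  · simp [dist_comm]
  have hZM' : 0 < dist Z M := dist_pos.mpr hZM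
  obtain ⟨c, hcs⟩ : ∃ c : ℝ, c * dist Z M = dist X M := ⟨_, div_mul_cancel₀ _ hZM'.ne'⟩
  have hc : 0 ≤ c := nonneg_of_mul_nonneg_left (hcs ▸ dist_nonneg) hZM'
  calc dist X M + dist Z M = dist Z (lineMap M Z (-c)) := by
        rw [dist_comm Z (lineMap _ _ _), dist_lineMap_right, Real.norm_of_nonneg (by linarith),
          dist_comm M Z]
        linear_combination -hcs
    _ ≤ dist Z X := by
        refine hmax _ (AffineMap.lineMap_mem (-c) hM hZ) ?_
        rw [dist_lineMap_left, norm_neg, Real.norm_of_nonneg hc, dist_comm M Z, hcs]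

end ExtremalDistance

section PerpBisector

variable {V P : Type*} [NormedAddCommGroup V] [InnerProductSpace ℝ V] [MetricSpace P]
  [NormedAddTorsor V P] {A B X Y : P}

theorem dist_sq_eq_dist_midpoint_sq_add_of_mem_perpBisector (hY : Y ∈ perpBisector A B) :
    dist Y A ^ 2 = dist Y (midpoint ℝ A B) ^ 2 + (dist A B / 2) ^ 2 := by
  have := dist_sq_add_dist_sq_eq_two_mul_dist_midpoint_sq_add_half_dist_sq Y A B
  rw [← mem_perpBisector_iff_dist_eq.mp hY] at this
  linarith

theorem dist_eq_and_dist_eq_iff_mem_perpBisector (hX : dist X A = dist X B) :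
    dist Y A = dist X A ∧ dist Y B = dist X A ↔
      Y ∈ perpBisector A B ∧ dist Y (midpoint ℝ A B) = dist X (midpoint ℝ A B) := by
  have hXA := dist_sq_eq_dist_midpoint_sq_add_of_mem_perpBisector
    (mem_perpBisector_iff_dist_eq.mpr hX)
  constructor
  · rintro ⟨hA, hB⟩
    have hY : Y ∈ perpBisector A B := mem_perpBisector_iff_dist_eq.mpr (hA.trans hB.symm)
    refine ⟨hY, (sq_eq_sq₀ dist_nonneg dist_nonneg).mp ?_⟩
    have hYA := dist_sq_eq_dist_midpoint_sq_add_of_mem_perpBisector hY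
    rw [hA] at hYA
    linarith
  · rintro ⟨hY, hYM⟩
    have hA : dist Y A = dist X A := (sq_eq_sq₀ dist_nonneg dist_nonneg).mp <| by
      rw [dist_sq_eq_dist_midpoint_sq_add_of_mem_perpBisector hY, hXA, hYM]
    exact ⟨hA, (mem_perpBisector_iff_dist_eq.mp hY).symm.trans hA⟩

end PerpBisector

theorem stmt_8_general (Z₁ Z₂ Z₃ S₁₂p S₁₂m : EuclideanSpace ℝ (Fin 2)) (d₁ d₂ d₃ s : ℝ)
    (hiso : dist Z₁ Z₃ = dist Z₂ Z₃) (hd : d₁ = d₂)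
    (hrel : d₃ ^ 2 = d₁ ^ 2 - dist Z₁ Z₃ ^ 2)
    (hs : s = dist Z₃ ((2 : ℝ)⁻¹ • (Z₁ + Z₂)))
    (hp₁ : dist S₁₂p Z₁ = d₁) (hp₂ : dist S₁₂p Z₂ = d₂)
    (hm₁ : dist S₁₂m Z₁ = d₁) (hm₂ : dist S₁₂m Z₂ = d₂)
    (hpmin : ∀ P, dist P Z₁ = d₁ → dist P Z₂ = d₂ → dist Z₃ S₁₂p ≤ dist Z₃ P)
    (hmmax : ∀ P, dist P Z₁ = d₁ → dist P Z₂ = d₂ → dist Z₃ P ≤ dist Z₃ S₁₂m)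
    (O : EuclideanSpace ℝ (Fin 2) → ℝ)
    (hO : ∀ W, O W = |d₁ ^ 2 - dist W Z₁ ^ 2| + |d₂ ^ 2 - dist W Z₂ ^ 2| +
      |d₃ ^ 2 - dist W Z₃ ^ 2|) :
    O S₁₂p = -2 * s ^ 2 + 2 * s * Real.sqrt (d₃ ^ 2 + s ^ 2) ∧
    O S₁₂m = 2 * s ^ 2 + 2 * s * Real.sqrt (d₃ ^ 2 + s ^ 2) := by
  subst hd
  rw [← invOf_eq_inv, ← midpoint_eq_smul_add] at hs
  set M := midpoint ℝ Z₁ Z₂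
  set t := dist S₁₂p M
  have hZ₃ : Z₃ ∈ perpBisector Z₁ Z₂ := mem_perpBisector_iff_dist_eq'.mpr hiso
  have hcircle (Y) : dist Y Z₁ = d₁ ∧ dist Y Z₂ = d₁ ↔ Y ∈ perpBisector Z₁ Z₂ ∧ dist Y M = t := by
    rw [← hp₁]; exact dist_eq_and_dist_eq_iff_mem_perpBisector (hp₁.trans hp₂.symm)
  have ht : t ^ 2 = d₃ ^ 2 + s ^ 2 := by
    have hZ₁Z₃ : dist Z₁ Z₃ ^ 2 = s ^ 2 + (dist Z₁ Z₂ / 2) ^ 2 := by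
      rw [dist_comm, hs, dist_sq_eq_dist_midpoint_sq_add_of_mem_perpBisector hZ₃]
    have hp : S₁₂p ∈ perpBisector Z₁ Z₂ := ((hcircle S₁₂p).mp ⟨hp₁, hp₂⟩).1
    have hd₁ : d₁ ^ 2 = t ^ 2 + (dist Z₁ Z₂ / 2) ^ 2 := by
      rw [← hp₁, dist_sq_eq_dist_midpoint_sq_add_of_mem_perpBisector hp]
    linarith
  have hs₀ : 0 ≤ s := hs ▸ dist_nonneg
  have hst : s ≤ t := by nlinarith [sq_nonneg d₃, dist_nonneg (x := S₁₂p) (y := M)]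
  have hdp : dist Z₃ S₁₂p = t - s := hs ▸ dist_eq_sub_of_forall_dist_le
    (midpoint_mem_perpBisector _ _) hZ₃ (hs ▸ hst) fun Y hY hYM ↦
      ((hcircle Y).mpr ⟨hY, hYM⟩).elim (hpmin Y)
  have hmt : dist S₁₂m M = t := ((hcircle S₁₂m).mp ⟨hm₁, hm₂⟩).2
  have hdm : dist Z₃ S₁₂m = t + s := hs ▸ hmt ▸ dist_eq_add_of_forall_dist_le
    (midpoint_mem_perpBisector _ _) hZ₃ fun Y hY hYM ↦
      ((hcircle Y).mpr ⟨hY, hYM.trans hmt⟩).elim (hmmax Y)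
  have hsqrt : Real.sqrt (d₃ ^ 2 + s ^ 2) = t := by rw [← ht, Real.sqrt_sq dist_nonneg]
  rw [hO, hO, hp₁, hp₂, hm₁, hm₂, dist_comm S₁₂p, dist_comm S₁₂m, hdp, hdm, hsqrt]
  simp only [sub_self, abs_zero, zero_add]
  constructor
  · rw [abs_of_nonneg (by nlinarith)]; linear_combination -ht
  · rw [abs_of_nonpos (by nlinarith)]; linear_combination ht

theorem stmt_8 (Z₁ Z₂ Z₃ S₁₂p S₁₂m : EuclideanSpace ℝ (Fin 2)) (d₁ d₂ d₃ r s : ℝ)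
    (hiso : dist Z₁ Z₃ = dist Z₂ Z₃) (hd : d₁ = d₂)
    (hd₁ : dist Z₁ Z₃ < d₁) (hd₃ : 0 ≤ d₃)
    (hrel : d₃ ^ 2 = d₁ ^ 2 - dist Z₁ Z₃ ^ 2)
    (hr : r = dist Z₁ Z₂) (hs : s = dist Z₃ ((2 : ℝ)⁻¹ • (Z₁ + Z₂)))
    (hp₁ : dist S₁₂p Z₁ = d₁) (hp₂ : dist S₁₂p Z₂ = d₂)
    (hm₁ : dist S₁₂m Z₁ = d₁) (hm₂ : dist S₁₂m Z₂ = d₂)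
    (hpmin : ∀ P, dist P Z₁ = d₁ → dist P Z₂ = d₂ → dist Z₃ S₁₂p ≤ dist Z₃ P)
    (hmmax : ∀ P, dist P Z₁ = d₁ → dist P Z₂ = d₂ → dist Z₃ P ≤ dist Z₃ S₁₂m)
    (O : EuclideanSpace ℝ (Fin 2) → ℝ)
    (hO : ∀ W, O W = |d₁ ^ 2 - dist W Z₁ ^ 2| + |d₂ ^ 2 - dist W Z₂ ^ 2| +
      |d₃ ^ 2 - dist W Z₃ ^ 2|) :
    O S₁₂p = -2 * s ^ 2 + 2 * s * Real.sqrt (d₃ ^ 2 + s ^ 2) ∧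
    O S₁₂m = 2 * s ^ 2 + 2 * s * Real.sqrt (d₃ ^ 2 + s ^ 2) :=
  stmt_8_general Z₁ Z₂ Z₃ S₁₂p S₁₂m d₁ d₂ d₃ s hiso hd hrel hs hp₁ hp₂ hm₁ hm₂ hpmin hmmax O hO
end

section
/- Let r, s > 0 with s > (√3/2) r, and define P = sqrt( r²/4 + s² · ((4s² + 5r²)/(4s² - 3r²))² ). Suppose d_1 > sqrt(s² + r²/4) and d_3 = sqrt(d_1² - s² - r²/4). Then -2s² + 2s·sqrt(d_3² + s²) < (2 r s d_3)/sqrt(s² + r²/4) if and only if d_1 < P; equality holds if and only if d_1 = P; and the reverse strict inequality holds if and only if d_1 > P. -/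
set_option maxHeartbeats 1000000 in
theorem stmt_10 (r s d₁ d₃ P : ℝ) (hr : 0 < r) (hs : 0 < s)
    (hsharp : Real.sqrt 3 / 2 * r < s)
    (hP : P = Real.sqrt (r ^ 2 / 4 +
      s ^ 2 * ((4 * s ^ 2 + 5 * r ^ 2) / (4 * s ^ 2 - 3 * r ^ 2)) ^ 2))
    (hd₁ : Real.sqrt (s ^ 2 + r ^ 2 / 4) < d₁)
    (hd₃ : d₃ = Real.sqrt (d₁ ^ 2 - s ^ 2 - r ^ 2 / 4)) :
    (-2 * s ^ 2 + 2 * s * Real.sqrt (d₃ ^ 2 + s ^ 2) <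
        2 * r * s * d₃ / Real.sqrt (s ^ 2 + r ^ 2 / 4) ↔ d₁ < P) ∧
    (-2 * s ^ 2 + 2 * s * Real.sqrt (d₃ ^ 2 + s ^ 2) =
        2 * r * s * d₃ / Real.sqrt (s ^ 2 + r ^ 2 / 4) ↔ d₁ = P) ∧
    (2 * r * s * d₃ / Real.sqrt (s ^ 2 + r ^ 2 / 4) <
        -2 * s ^ 2 + 2 * s * Real.sqrt (d₃ ^ 2 + s ^ 2) ↔ P < d₁) := by
  set q : ℝ := Real.sqrt (s ^ 2 + r ^ 2 / 4) with hqdef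
  have hq0 : 0 < q := Real.sqrt_pos.mpr (by positivity)
  have hq2 : q ^ 2 = s ^ 2 + r ^ 2 / 4 := Real.sq_sqrt (by positivity)
  -- sharpness: s^2 > 3/4 r^2
  have h3 : Real.sqrt 3 ^ 2 = 3 := Real.sq_sqrt (by norm_num)
  have h34 : 3 / 4 * r ^ 2 < s ^ 2 := by
    have h := pow_lt_pow_left₀ hsharp (by positivity : (0:ℝ) ≤ Real.sqrt 3 / 2 * r) (two_ne_zero)
    calc 3 / 4 * r ^ 2 = (Real.sqrt 3 / 2 * r) ^ 2 := by rw [mul_pow, div_pow, h3]; ring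
      _ < s ^ 2 := h
  have hA : 0 < q ^ 2 - r ^ 2 := by rw [hq2]; nlinarith
  have hAne : q ^ 2 - r ^ 2 ≠ 0 := ne_of_gt hA
  have hd10 : 0 < d₁ := lt_trans hq0 hd₁
  have hd12 : q ^ 2 < d₁ ^ 2 := pow_lt_pow_left₀ hd₁ hq0.le two_ne_zero
  have hd32 : d₃ ^ 2 = d₁ ^ 2 - q ^ 2 := by
    rw [hd₃, Real.sq_sqrt (by nlinarith), hq2]; ring
  have hd30 : 0 < d₃ := by
    rw [hd₃]; apply Real.sqrt_pos.mpr; nlinarith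
  set D : ℝ := 2 * s * r * q / (q ^ 2 - r ^ 2) with hDdef
  have hD0 : 0 < D := by positivity
  have hD2 : D ^ 2 * (q ^ 2 - r ^ 2) ^ 2 = 4 * s ^ 2 * r ^ 2 * q ^ 2 := by
    rw [hDdef]; field_simp; ring
  have h4s : (0:ℝ) < 4 * s ^ 2 - 3 * r ^ 2 := by nlinarith
  have hP0 : 0 < P := by rw [hP]; exact Real.sqrt_pos.mpr (by positivity)
  have hP2 : P ^ 2 = q ^ 2 + D ^ 2 := by
    have hPsq : P ^ 2 = r ^ 2 / 4 +
        s ^ 2 * ((4 * s ^ 2 + 5 * r ^ 2) / (4 * s ^ 2 - 3 * r ^ 2)) ^ 2 := by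
      rw [hP]; exact Real.sq_sqrt (by positivity)
    have hTne : ((4 * s ^ 2 - 3 * r ^ 2) ^ 2 : ℝ) ≠ 0 := pow_ne_zero 2 (ne_of_gt h4s)
    have h16 : (4 * s ^ 2 - 3 * r ^ 2) = 4 * (q ^ 2 - r ^ 2) := by rw [hq2]; ring
    have hDT : D ^ 2 * (4 * s ^ 2 - 3 * r ^ 2) ^ 2 = 16 * (4 * s ^ 2 * r ^ 2 * q ^ 2) := by
      calc D ^ 2 * (4 * s ^ 2 - 3 * r ^ 2) ^ 2
          = 16 * (D ^ 2 * (q ^ 2 - r ^ 2) ^ 2) := by rw [h16]; ring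
        _ = 16 * (4 * s ^ 2 * r ^ 2 * q ^ 2) := by rw [hD2]
    have key : P ^ 2 * (4 * s ^ 2 - 3 * r ^ 2) ^ 2 =
        (q ^ 2 + D ^ 2) * (4 * s ^ 2 - 3 * r ^ 2) ^ 2 := by
      rw [hPsq, div_pow, add_mul, mul_assoc, div_mul_cancel₀ _ hTne,
        add_mul (q ^ 2) (D ^ 2), hDT, hq2]
      ring
    exact mul_right_cancel₀ hTne key
  -- the key reduction: comparing with s + r*d₃/q
  have hy0 : 0 < s + r * d₃ / q := by positivity
  have hexp : (s + r * d₃ / q) ^ 2 = (s * q + r * d₃) ^ 2 / q ^ 2 := by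
    field_simp
  have keylt : (d₃ ^ 2 + s ^ 2 < (s + r * d₃ / q) ^ 2) ↔ d₃ < D := by
    rw [hexp, lt_div_iff₀ (by positivity : (0:ℝ) < q ^ 2)]
    constructor
    · intro h
      have h2 : d₃ * (d₃ * (q ^ 2 - r ^ 2)) < d₃ * (2 * s * r * q) := by linarith [h]
      have h3' : d₃ * (q ^ 2 - r ^ 2) < 2 * s * r * q :=
        lt_of_mul_lt_mul_left h2 hd30.le
      have h4 : d₃ * (q ^ 2 - r ^ 2) < D * (q ^ 2 - r ^ 2) := by
        rw [hDdef, div_mul_cancel₀ _ hAne]; exact h3'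
      exact lt_of_mul_lt_mul_right h4 hA.le
    · intro h
      have h2 : d₃ * (q ^ 2 - r ^ 2) < 2 * s * r * q := by
        have h5 := mul_lt_mul_of_pos_right h hA
        rwa [hDdef, div_mul_cancel₀ _ hAne] at h5
      linarith [mul_lt_mul_of_pos_left h2 hd30]
  have keyeq : (d₃ ^ 2 + s ^ 2 = (s + r * d₃ / q) ^ 2) ↔ d₃ = D := by
    rw [hexp, eq_div_iff (by positivity : (q:ℝ) ^ 2 ≠ 0)]
    constructor
    · intro h
      have h5 : d₃ * (d₃ * (q ^ 2 - r ^ 2) - 2 * s * r * q) = 0 := by linear_combination h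
      have h6 : d₃ * (q ^ 2 - r ^ 2) - 2 * s * r * q = 0 :=
        (mul_eq_zero.mp h5).resolve_left (ne_of_gt hd30)
      have h3' : d₃ * (q ^ 2 - r ^ 2) = 2 * s * r * q := by linarith
      rw [hDdef, eq_div_iff hAne, h3']
    · intro h
      have h3' : d₃ * (q ^ 2 - r ^ 2) = 2 * s * r * q := by
        rw [h, hDdef, div_mul_cancel₀ _ hAne]
      linear_combination d₃ * h3'
  set X : ℝ := d₃ ^ 2 + s ^ 2 with hXdef
  have hX0 : (0:ℝ) ≤ X := by positivity
  have sqrtlt : Real.sqrt X < s + r * d₃ / q ↔ X < (s + r * d₃ / q) ^ 2 :=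
    Real.sqrt_lt' hy0
  have sqrteq : Real.sqrt X = s + r * d₃ / q ↔ X = (s + r * d₃ / q) ^ 2 := by
    constructor
    · intro h; rw [← Real.sq_sqrt hX0, h]
    · intro h; rw [h, Real.sqrt_sq hy0.le]
  have sqrtgt : s + r * d₃ / q < Real.sqrt X ↔ (s + r * d₃ / q) ^ 2 < X := by
    constructor
    · intro h
      rcases lt_trichotomy X ((s + r * d₃ / q) ^ 2) with h1 | h1 | h1
      · exact absurd (sqrtlt.mpr h1) (not_lt.mpr h.le)
      · exact absurd (sqrteq.mpr h1) (ne_of_gt h)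
      · exact h1
    · intro h
      rcases lt_trichotomy (Real.sqrt X) (s + r * d₃ / q) with h1 | h1 | h1
      · exact absurd (sqrtlt.mp h1) (not_lt.mpr h.le)
      · exact absurd (sqrteq.mp h1) (by rw [h1] at *; exact fun h2 => absurd h2 (ne_of_gt h))
      · exact h1
  have h2s : (0:ℝ) < 2 * s := by positivity
  have lin_lt : (-2 * s ^ 2 + 2 * s * Real.sqrt X < 2 * r * s * d₃ / q) ↔
      Real.sqrt X < s + r * d₃ / q := by
    constructor
    · intro h
      have h' : 2 * s * Real.sqrt X < 2 * s * (s + r * d₃ / q) := by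
        have e : 2 * s * (s + r * d₃ / q) = 2 * s ^ 2 + 2 * r * s * d₃ / q := by ring
        linarith [e]
      exact lt_of_mul_lt_mul_left h' h2s.le
    · intro h
      have h' := mul_lt_mul_of_pos_left h h2s
      have e : 2 * s * (s + r * d₃ / q) = 2 * s ^ 2 + 2 * r * s * d₃ / q := by ring
      linarith [e]
  have lin_eq : (-2 * s ^ 2 + 2 * s * Real.sqrt X = 2 * r * s * d₃ / q) ↔
      Real.sqrt X = s + r * d₃ / q := by
    constructor
    · intro h
      have h2 : 2 * s * Real.sqrt X = 2 * s * (s + r * d₃ / q) := by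
        have e : 2 * s * (s + r * d₃ / q) = 2 * s ^ 2 + 2 * r * s * d₃ / q := by ring
        linarith [e]
      exact mul_left_cancel₀ (ne_of_gt h2s) h2
    · intro h
      rw [h]; ring
  have lin_gt : (2 * r * s * d₃ / q < -2 * s ^ 2 + 2 * s * Real.sqrt X) ↔
      s + r * d₃ / q < Real.sqrt X := by
    constructor
    · intro h
      have h' : 2 * s * (s + r * d₃ / q) < 2 * s * Real.sqrt X := by
        have e : 2 * s * (s + r * d₃ / q) = 2 * s ^ 2 + 2 * r * s * d₃ / q := by ring
        linarith [e]
      exact lt_of_mul_lt_mul_left h' h2s.le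
    · intro h
      have h' := mul_lt_mul_of_pos_left h h2s
      have e : 2 * s * (s + r * d₃ / q) = 2 * s ^ 2 + 2 * r * s * d₃ / q := by ring
      linarith [e]
  have dDlt : d₃ < D ↔ d₁ < P := by
    rw [← pow_lt_pow_iff_left₀ hd30.le hD0.le two_ne_zero,
        ← pow_lt_pow_iff_left₀ hd10.le hP0.le two_ne_zero, hd32, hP2]
    constructor <;> intro h <;> linarith
  have dDgt : D < d₃ ↔ P < d₁ := by
    rw [← pow_lt_pow_iff_left₀ hD0.le hd30.le two_ne_zero,
        ← pow_lt_pow_iff_left₀ hP0.le hd10.le two_ne_zero, hd32, hP2]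
    constructor <;> intro h <;> linarith
  have sq_inj : ∀ a b : ℝ, 0 < a → 0 < b → a ^ 2 = b ^ 2 → a = b := by
    intro a b ha hb hab
    have h2 : |a| = |b| := by
      rw [← Real.sqrt_sq_eq_abs, ← Real.sqrt_sq_eq_abs, hab]
    rwa [abs_of_pos ha, abs_of_pos hb] at h2
  have dDeq : d₃ = D ↔ d₁ = P := by
    constructor
    · intro h
      have h2 : d₁ ^ 2 = P ^ 2 := by rw [hP2, ← h, hd32]; ring
      exact sq_inj _ _ hd10 hP0 h2
    · intro h
      have h2 : d₃ ^ 2 = D ^ 2 := by rw [hd32, h, hP2]; ring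
      exact sq_inj _ _ hd30 hD0 h2
  have keygt : ((s + r * d₃ / q) ^ 2 < d₃ ^ 2 + s ^ 2) ↔ D < d₃ := by
    constructor
    · intro h
      rcases lt_trichotomy d₃ D with h1 | h1 | h1
      · exact absurd (keylt.mpr h1) (not_lt.mpr h.le)
      · exact absurd (keyeq.mpr h1) (ne_of_gt h)
      · exact h1
    · intro h
      rcases lt_trichotomy ((s + r * d₃ / q) ^ 2) (d₃ ^ 2 + s ^ 2) with h1 | h1 | h1
      · exact h1
      · exact absurd (keyeq.mp h1.symm) (ne_of_gt h)
      · exact absurd (keylt.mp h1) (not_lt.mpr h.le)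
  refine ⟨?_, ?_, ?_⟩
  · rw [lin_lt, sqrtlt, keylt, dDlt]
  · rw [lin_eq, sqrteq, keyeq, dDeq]
  · rw [lin_gt, sqrtgt, keygt, dDgt]
end

section
/- Suppose S_{12+}, S_{23+}, S_{31+} ∈ ℝ² all lie inside or on all three disks (i.e., ||S_{ij+} - Z_k|| ≤ d_k for all k), each S_{ij+} lies on circles S_i and S_j, and O(S_{12+}) = O(S_{23+}) = O(S_{31+}). Then ||S_{12+} - Y_0|| = ||S_{23+} - Y_0|| = ||S_{31+} - Y_0||, where Y_0 = (Z_1 + Z_2 + Z_3)/3. -/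
/-! Inside all three disks every absolute value in `O` opens with a plus sign, so
`O W = Σ dⱼ² - Σ ‖W - Zⱼ‖²`. By the parallel-axis identity
`Σ ‖W - Zⱼ‖² = 3 ‖W - Y₀‖² + Σ ‖Zⱼ - Y₀‖²`, the objective is a strictly decreasing function of
`‖W - Y₀‖` on that region, so equal objective values force equal distances to `Y₀`. -/

theorem abs_sq_sub_dist_sq_of_dist_le {α : Type*} [PseudoMetricSpace α] {W Z : α} {d : ℝ}
    (h : dist W Z ≤ d) : |d ^ 2 - dist W Z ^ 2| = d ^ 2 - dist W Z ^ 2 :=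
  abs_of_nonneg (sub_nonneg.2 (pow_le_pow_left₀ dist_nonneg h 2))

section ThreeDisks

variable {E : Type*} [NormedAddCommGroup E] [InnerProductSpace ℝ E]

theorem dist_sq_add_dist_sq_add_dist_sq_eq (W A B C : E) :
    dist W A ^ 2 + dist W B ^ 2 + dist W C ^ 2 =
      3 * dist W ((3 : ℝ)⁻¹ • (A + B + C)) ^ 2 +
        (dist A ((3 : ℝ)⁻¹ • (A + B + C)) ^ 2 + dist B ((3 : ℝ)⁻¹ • (A + B + C)) ^ 2 +
          dist C ((3 : ℝ)⁻¹ • (A + B + C)) ^ 2) := by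
  simp only [dist_eq_norm, ← real_inner_self_eq_norm_sq, inner_sub_left, inner_sub_right,
    inner_add_left, inner_add_right, real_inner_smul_left, real_inner_smul_right,
    real_inner_comm W A, real_inner_comm W B, real_inner_comm W C, real_inner_comm A B,
    real_inner_comm A C, real_inner_comm B C]
  ring

theorem abs_sub_dist_sq_sum_of_mem_disks {Z₁ Z₂ Z₃ W : E} {d₁ d₂ d₃ : ℝ}
    (h₁ : dist W Z₁ ≤ d₁) (h₂ : dist W Z₂ ≤ d₂) (h₃ : dist W Z₃ ≤ d₃) :
    |d₁ ^ 2 - dist W Z₁ ^ 2| + |d₂ ^ 2 - dist W Z₂ ^ 2| + |d₃ ^ 2 - dist W Z₃ ^ 2| =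
      d₁ ^ 2 + d₂ ^ 2 + d₃ ^ 2 -
        (dist Z₁ ((3 : ℝ)⁻¹ • (Z₁ + Z₂ + Z₃)) ^ 2 + dist Z₂ ((3 : ℝ)⁻¹ • (Z₁ + Z₂ + Z₃)) ^ 2 +
          dist Z₃ ((3 : ℝ)⁻¹ • (Z₁ + Z₂ + Z₃)) ^ 2) -
        3 * dist W ((3 : ℝ)⁻¹ • (Z₁ + Z₂ + Z₃)) ^ 2 := by
  rw [abs_sq_sub_dist_sq_of_dist_le h₁, abs_sq_sub_dist_sq_of_dist_le h₂,
    abs_sq_sub_dist_sq_of_dist_le h₃]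
  linarith [dist_sq_add_dist_sq_add_dist_sq_eq W Z₁ Z₂ Z₃]

theorem dist_centroid_eq_of_abs_sub_dist_sq_sum_eq {Z₁ Z₂ Z₃ V W : E} {d₁ d₂ d₃ : ℝ}
    (hV : dist V Z₁ ≤ d₁ ∧ dist V Z₂ ≤ d₂ ∧ dist V Z₃ ≤ d₃)
    (hW : dist W Z₁ ≤ d₁ ∧ dist W Z₂ ≤ d₂ ∧ dist W Z₃ ≤ d₃)
    (h : |d₁ ^ 2 - dist V Z₁ ^ 2| + |d₂ ^ 2 - dist V Z₂ ^ 2| + |d₃ ^ 2 - dist V Z₃ ^ 2| =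
      |d₁ ^ 2 - dist W Z₁ ^ 2| + |d₂ ^ 2 - dist W Z₂ ^ 2| + |d₃ ^ 2 - dist W Z₃ ^ 2|) :
    dist V ((3 : ℝ)⁻¹ • (Z₁ + Z₂ + Z₃)) = dist W ((3 : ℝ)⁻¹ • (Z₁ + Z₂ + Z₃)) := by
  rw [abs_sub_dist_sq_sum_of_mem_disks hV.1 hV.2.1 hV.2.2,
    abs_sub_dist_sq_sum_of_mem_disks hW.1 hW.2.1 hW.2.2] at h
  exact (sq_eq_sq₀ dist_nonneg dist_nonneg).1 (by linarith)

end ThreeDisks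

theorem stmt_13_general (Z₁ Z₂ Z₃ S₁₂p S₂₃p S₃₁p Y₀ : EuclideanSpace ℝ (Fin 2))
    (d₁ d₂ d₃ : ℝ)
    (hY₀ : Y₀ = (3 : ℝ)⁻¹ • (Z₁ + Z₂ + Z₃))
    (h12R : dist S₁₂p Z₁ ≤ d₁ ∧ dist S₁₂p Z₂ ≤ d₂ ∧ dist S₁₂p Z₃ ≤ d₃)
    (h23R : dist S₂₃p Z₁ ≤ d₁ ∧ dist S₂₃p Z₂ ≤ d₂ ∧ dist S₂₃p Z₃ ≤ d₃)
    (h31R : dist S₃₁p Z₁ ≤ d₁ ∧ dist S₃₁p Z₂ ≤ d₂ ∧ dist S₃₁p Z₃ ≤ d₃)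
    (O : EuclideanSpace ℝ (Fin 2) → ℝ)
    (hO : ∀ W, O W = |d₁ ^ 2 - dist W Z₁ ^ 2| + |d₂ ^ 2 - dist W Z₂ ^ 2| +
      |d₃ ^ 2 - dist W Z₃ ^ 2|)
    (heq : O S₁₂p = O S₂₃p ∧ O S₂₃p = O S₃₁p) :
    dist S₁₂p Y₀ = dist S₂₃p Y₀ ∧ dist S₂₃p Y₀ = dist S₃₁p Y₀ := by
  simp only [hO] at heq
  subst hY₀
  exact ⟨dist_centroid_eq_of_abs_sub_dist_sq_sum_eq h12R h23R heq.1,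
    dist_centroid_eq_of_abs_sub_dist_sq_sum_eq h23R h31R heq.2⟩

theorem stmt_13 (Z₁ Z₂ Z₃ S₁₂p S₂₃p S₃₁p Y₀ : EuclideanSpace ℝ (Fin 2))
    (d₁ d₂ d₃ : ℝ) (hd₁ : 0 < d₁) (hd₂ : 0 < d₂) (hd₃ : 0 < d₃)
    (hY₀ : Y₀ = (3 : ℝ)⁻¹ • (Z₁ + Z₂ + Z₃))
    (h12R : dist S₁₂p Z₁ ≤ d₁ ∧ dist S₁₂p Z₂ ≤ d₂ ∧ dist S₁₂p Z₃ ≤ d₃)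
    (h23R : dist S₂₃p Z₁ ≤ d₁ ∧ dist S₂₃p Z₂ ≤ d₂ ∧ dist S₂₃p Z₃ ≤ d₃)
    (h31R : dist S₃₁p Z₁ ≤ d₁ ∧ dist S₃₁p Z₂ ≤ d₂ ∧ dist S₃₁p Z₃ ≤ d₃)
    (h12 : dist S₁₂p Z₁ = d₁ ∧ dist S₁₂p Z₂ = d₂)
    (h23 : dist S₂₃p Z₂ = d₂ ∧ dist S₂₃p Z₃ = d₃)
    (h31 : dist S₃₁p Z₃ = d₃ ∧ dist S₃₁p Z₁ = d₁)
    (O : EuclideanSpace ℝ (Fin 2) → ℝ)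
    (hO : ∀ W, O W = |d₁ ^ 2 - dist W Z₁ ^ 2| + |d₂ ^ 2 - dist W Z₂ ^ 2| +
      |d₃ ^ 2 - dist W Z₃ ^ 2|)
    (heq : O S₁₂p = O S₂₃p ∧ O S₂₃p = O S₃₁p) :
    dist S₁₂p Y₀ = dist S₂₃p Y₀ ∧ dist S₂₃p Y₀ = dist S₃₁p Y₀ :=
  stmt_13_general Z₁ Z₂ Z₃ S₁₂p S₂₃p S₃₁p Y₀ d₁ d₂ d₃ hY₀ h12R h23R h31R O hO heq
end

section
/- Let r, s, u > 0 and set |Z_1Z_3|² = s² + r²/4. For t ∈ [0,1] define g(t) = (2s/(s² + r²/4)) · ( -u((s² - r²/4)t + r²/2) + r·sqrt( -s²u²t² + 2su(s² + r²/4 + su)t + r²u²/4 ) ). Then g(0) = 0, g is strictly concave on [0,1], and g(1) > 0 if and only if s ≤ (√3/2) r or u < 2r²s/(s² - 3r²/4); g(1) = 0 if and only if s > (√3/2) r and u = 2r²s/(s² - 3r²/4); g(1) < 0 if and only if s > (√3/2) r and u > 2r²s/(s² - 3r²/4). -/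
/-!
At `t = 0` the radicand is the square `(r u / 2)²`, so `g 0 = 0`. The function `g` is a linear
function plus a positive multiple of the square root of a quadratic with negative leading
coefficient, hence strictly concave. At `t = 1` the radicand factors as `u K (u + 2s)` with
`K = s² + r²/4`, so `g 1` is a positive multiple of `√(r² u K (u + 2s)) - u K`, whose sign is
that of `r² u K (u + 2s) - (u K)² = u K (2 r² s - u (s² - 3r²/4))`.
-/

open Set SignType

section Concavity

variable {E : Type*} [AddCommGroup E] [Module ℝ E] {s : Set E} {f : E → ℝ}

theorem StrictConcaveOn.const_mul {c : ℝ} (hc : 0 < c) (hf : StrictConcaveOn ℝ s f) :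
    StrictConcaveOn ℝ s fun x => c * f x := by
  refine ⟨hf.1, fun x hx y hy hxy a b ha hb hab => ?_⟩
  have h := hf.2 hx hy hxy ha hb hab
  simp only [smul_eq_mul] at h ⊢
  calc a * (c * f x) + b * (c * f y) = c * (a * f x + b * f y) := by ring
    _ < c * f (a • x + b • y) := mul_lt_mul_of_pos_left h hc

theorem StrictConcaveOn.sqrt (hf : StrictConcaveOn ℝ s f) (hf₀ : ∀ x ∈ s, 0 ≤ f x) :
    StrictConcaveOn ℝ s fun x => √(f x) := by
  refine ⟨hf.1, fun x hx y hy hxy a b ha hb hab => ?_⟩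
  have hmid : 0 ≤ a • f x + b • f y := by
    simp only [smul_eq_mul]
    exact add_nonneg (mul_nonneg ha.le (hf₀ x hx)) (mul_nonneg hb.le (hf₀ y hy))
  calc a • √(f x) + b • √(f y) ≤ √(a • f x + b • f y) :=
        Real.strictConcaveOn_sqrt.concaveOn.2 (hf₀ x hx) (hf₀ y hy) ha.le hb.le hab
    _ < √(f (a • x + b • y)) := Real.sqrt_lt_sqrt hmid (hf.2 hx hy hxy ha hb hab)

end Concavity

theorem concaveOn_affine {s : Set ℝ} (hs : Convex ℝ s) (m b : ℝ) :
    ConcaveOn ℝ s fun t => m * t + b := by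
  refine ⟨hs, fun x _ y _ a c _ _ hac => le_of_eq ?_⟩
  simp only [smul_eq_mul]
  linear_combination b * hac

theorem strictConcaveOn_neg_quadratic {A : ℝ} (hA : 0 < A) (B C : ℝ) :
    StrictConcaveOn ℝ univ fun t => -(A * t ^ 2) + B * t + C := by
  refine ⟨convex_univ, fun x _ y _ hxy a b ha hb hab => ?_⟩
  obtain rfl : b = 1 - a := by linarith
  have hgap : 0 < A * (a * (1 - a)) * (x - y) ^ 2 :=
    mul_pos (mul_pos hA (mul_pos ha hb)) (pow_two_pos_of_ne_zero (sub_ne_zero.2 hxy))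
  simp only [smul_eq_mul]
  linear_combination hgap

theorem sign_sqrt_sub {x y : ℝ} (hx : 0 ≤ x) (hy : 0 < y) :
    sign (√x - y) = sign (x - y ^ 2) := by
  have hfactor : x - y ^ 2 = (√x - y) * (√x + y) := by
    linear_combination -Real.sq_sqrt hx
  rw [hfactor, sign_mul, sign_pos (by positivity : 0 < √x + y), mul_one]

section SignOfAffine

variable {a u e : ℝ}

theorem pos_sub_mul_iff (ha : 0 < a) (hu : 0 < u) : 0 < a - u * e ↔ e ≤ 0 ∨ u < a / e := by
  rcases le_or_gt e 0 with he | he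
  · have : u * e ≤ 0 := mul_nonpos_of_nonneg_of_nonpos hu.le he
    exact iff_of_true (by linarith) (Or.inl he)
  · rw [lt_div_iff₀ he, sub_pos]
    simp only [not_le.2 he, false_or]

theorem sub_mul_eq_zero_iff (ha : 0 < a) (hu : 0 < u) : a - u * e = 0 ↔ 0 < e ∧ u = a / e := by
  rcases le_or_gt e 0 with he | he
  · have : u * e ≤ 0 := mul_nonpos_of_nonneg_of_nonpos hu.le he
    exact iff_of_false (by linarith) fun h => (not_lt.2 he) h.1
  · rw [eq_div_iff he.ne', sub_eq_zero, eq_comm]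
    simp only [he, true_and]

theorem sub_mul_neg_iff (ha : 0 < a) (hu : 0 < u) : a - u * e < 0 ↔ 0 < e ∧ a / e < u := by
  rcases le_or_gt e 0 with he | he
  · have : u * e ≤ 0 := mul_nonpos_of_nonneg_of_nonpos hu.le he
    exact iff_of_false (by linarith) fun h => (not_lt.2 he) h.1
  · rw [div_lt_iff₀ he, sub_neg]
    simp only [he, true_and]

end SignOfAffine

theorem le_sqrt_three_div_two_mul_iff {r s : ℝ} (hr : 0 ≤ r) (hs : 0 ≤ s) :
    s ≤ √3 / 2 * r ↔ s ^ 2 - 3 * r ^ 2 / 4 ≤ 0 := by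
  have h : √3 / 2 * r = √(3 * r ^ 2 / 4) := by
    rw [Real.sqrt_div' _ (by norm_num : (0:ℝ) ≤ 4), Real.sqrt_mul' _ (sq_nonneg r),
      Real.sqrt_sq hr, show (4:ℝ) = 2 ^ 2 by norm_num, Real.sqrt_sq (by norm_num)]
    ring
  rw [h, Real.le_sqrt hs (by positivity), sub_nonpos]

/-- The paper's `g = O(S₃₁₋) - O(S₁₂₊)`, with `s ^ 2 + r ^ 2 / 4 = |Z₁Z₃|²`. -/
noncomputable def gapFunction (r s u t : ℝ) : ℝ :=
  (2 * s / (s ^ 2 + r ^ 2 / 4)) *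
    (-(u * ((s ^ 2 - r ^ 2 / 4) * t + r ^ 2 / 2)) +
      r * √(-(s ^ 2 * u ^ 2 * t ^ 2) +
        2 * s * u * (s ^ 2 + r ^ 2 / 4 + s * u) * t + r ^ 2 * u ^ 2 / 4))

section GapFunction

variable {r s u : ℝ}

theorem gapFunction_zero (hr : 0 ≤ r) (hu : 0 ≤ u) : gapFunction r s u 0 = 0 := by
  rw [gapFunction, show -(s ^ 2 * u ^ 2 * 0 ^ 2) + 2 * s * u * (s ^ 2 + r ^ 2 / 4 + s * u) * 0
    + r ^ 2 * u ^ 2 / 4 = (r * u / 2) ^ 2 by ring, Real.sqrt_sq (by positivity)]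
  ring

theorem strictConcaveOn_gapFunction (hr : 0 < r) (hs : 0 < s) (hu : 0 < u) :
    StrictConcaveOn ℝ (Icc 0 1) (gapFunction r s u) := by
  set K := s ^ 2 + r ^ 2 / 4
  have hq : ∀ t ∈ Icc (0 : ℝ) 1,
      0 ≤ -(s ^ 2 * u ^ 2 * t ^ 2) + 2 * s * u * (K + s * u) * t + r ^ 2 * u ^ 2 / 4 := by
    rintro t ⟨ht₀, ht₁⟩
    have : 0 ≤ t * (1 - t) := mul_nonneg ht₀ (by linarith)
    nlinarith [mul_nonneg (by positivity : 0 ≤ s ^ 2 * u ^ 2) this,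
      mul_nonneg (by positivity : 0 ≤ s * u * (2 * K + s * u)) ht₀]
  have hsqrt := (((strictConcaveOn_neg_quadratic (by positivity) _ _).subset (subset_univ _)
    (convex_Icc 0 1)).sqrt hq).const_mul hr
  refine (((concaveOn_affine (convex_Icc 0 1) (-(u * (s ^ 2 - r ^ 2 / 4))) (-(u * (r ^ 2 / 2))))
    |>.add_strictConcaveOn hsqrt).const_mul (by positivity : 0 < 2 * s / K)).congr fun t _ => ?_
  simp only [gapFunction, Pi.add_apply]
  ring

theorem sign_gapFunction_one (hr : 0 < r) (hs : 0 < s) (hu : 0 < u) :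
    sign (gapFunction r s u 1) = sign (2 * r ^ 2 * s - u * (s ^ 2 - 3 * r ^ 2 / 4)) := by
  set K := s ^ 2 + r ^ 2 / 4 with hK
  have hg1 : gapFunction r s u 1 = 2 * s / K * (√(r ^ 2 * (u * K * (u + 2 * s))) - u * K) := by
    rw [gapFunction, Real.sqrt_mul (sq_nonneg r), Real.sqrt_sq hr.le,
      show -(s ^ 2 * u ^ 2 * 1 ^ 2) + 2 * s * u * (K + s * u) * 1 + r ^ 2 * u ^ 2 / 4
        = u * K * (u + 2 * s) by ring]
    ring
  calc sign (gapFunction r s u 1) = sign (√(r ^ 2 * (u * K * (u + 2 * s))) - u * K) := by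
        rw [hg1, sign_mul, sign_pos (by positivity : 0 < 2 * s / K), one_mul]
    _ = sign (r ^ 2 * (u * K * (u + 2 * s)) - (u * K) ^ 2) :=
        sign_sqrt_sub (by positivity) (by positivity)
    _ = sign (u * K * (2 * r ^ 2 * s - u * (s ^ 2 - 3 * r ^ 2 / 4))) := by
        rw [hK]
        ring_nf
    _ = sign (2 * r ^ 2 * s - u * (s ^ 2 - 3 * r ^ 2 / 4)) := by
        rw [sign_mul, sign_pos (by positivity : 0 < u * K), one_mul]

end GapFunction

theorem stmt_16 (r s u : ℝ) (hr : 0 < r) (hs : 0 < s) (hu : 0 < u)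
    (g : ℝ → ℝ)
    (hg : ∀ t, g t = (2 * s / (s ^ 2 + r ^ 2 / 4)) *
      (-(u * ((s ^ 2 - r ^ 2 / 4) * t + r ^ 2 / 2)) +
        r * Real.sqrt (-(s ^ 2 * u ^ 2 * t ^ 2) +
          2 * s * u * (s ^ 2 + r ^ 2 / 4 + s * u) * t + r ^ 2 * u ^ 2 / 4))) :
    g 0 = 0 ∧
    StrictConcaveOn ℝ (Set.Icc (0 : ℝ) 1) g ∧
    (0 < g 1 ↔ s ≤ Real.sqrt 3 / 2 * r ∨ u < 2 * r ^ 2 * s / (s ^ 2 - 3 * r ^ 2 / 4)) ∧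
    (g 1 = 0 ↔ Real.sqrt 3 / 2 * r < s ∧ u = 2 * r ^ 2 * s / (s ^ 2 - 3 * r ^ 2 / 4)) ∧
    (g 1 < 0 ↔ Real.sqrt 3 / 2 * r < s ∧ 2 * r ^ 2 * s / (s ^ 2 - 3 * r ^ 2 / 4) < u) := by
  obtain rfl : g = gapFunction r s u := funext hg
  have hsign := sign_gapFunction_one hr hs hu
  have ha : 0 < 2 * r ^ 2 * s := by positivity
  have hthreshold := le_sqrt_three_div_two_mul_iff hr.le hs.le
  have hthreshold' : √3 / 2 * r < s ↔ 0 < s ^ 2 - 3 * r ^ 2 / 4 := by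
    rw [← not_le, hthreshold, not_le]
  refine ⟨gapFunction_zero hr.le hu.le, strictConcaveOn_gapFunction hr hs hu, ?_, ?_, ?_⟩
  · rw [← sign_eq_one_iff, hsign, sign_eq_one_iff, pos_sub_mul_iff ha hu, hthreshold]
  · rw [← sign_eq_zero_iff, hsign, sign_eq_zero_iff, sub_mul_eq_zero_iff ha hu, hthreshold']
  · rw [← sign_eq_neg_one_iff, hsign, sign_eq_neg_one_iff, sub_mul_neg_iff ha hu, hthreshold']
end
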